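/- arXiv:2009.06793 — 6 statements merged into one kernel-verified Lean document; each statement's English description precedes it below -/
import Mathlib

section
/- For all positive integers n and all k with 0 ≤ k ≤ n-1, we have C(n-1,k)·C(2n+1,n-k) - 2·C(n-1,k)·C(2n,n-k-1) - 2·C(n-1,k-1)·C(2n,n-k-1) = (1/n)·C(n,k)·C(2n,n-1-k), i.e., n·(C(n-1,k)·C(2n+1,n-k) - 2·C(n-1,k)·C(2n,n-k-1) - 2·C(n-1,k-1)·C(2n,n-k-1)) = C(n,k)·C(2n,n-1-k). -/
/-!
Write `m = n - 1 - k`. Pascal's rule merges the last two terms into `-2 n C(n,k) C(2n,m)`.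
The absorption identities `n C(n-1,k) = (n-k) C(n,k)` and `(m+1) C(2n+1,m+1) = (2n+1) C(2n,m)`
turn the first term into `(2n+1) C(n,k) C(2n,m)`, so `C(n,k) C(2n,m)` is what remains.
-/

/-- Binomial coefficient on integers: `C a b = 0` when `b < 0` or `b > a`. -/
def intChoose (a b : ℤ) : ℤ :=
  if 0 ≤ b ∧ b ≤ a then (a.toNat).choose b.toNat else 0

theorem intChoose_natCast (a b : ℕ) : intChoose a b = a.choose b := by
  unfold intChoose
  split_ifs with h
  · simp
  · rw [Nat.choose_eq_zero_of_lt (by omega), Nat.cast_zero]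

theorem intChoose_of_neg {a b : ℤ} (hb : b < 0) : intChoose a b = 0 :=
  if_neg (by omega)

theorem intChoose_succ {a : ℤ} (ha : 0 ≤ a) (b : ℤ) :
    intChoose (a + 1) b = intChoose a (b - 1) + intChoose a b := by
  lift a to ℕ using ha
  rcases lt_or_ge b 0 with hb | hb
  · rw [intChoose_of_neg hb, intChoose_of_neg hb, intChoose_of_neg (by omega), add_zero]
  lift b to ℕ using hb
  rw [← Nat.cast_succ, intChoose_natCast, intChoose_natCast]
  cases b with
  | zero => simp [intChoose_of_neg]
  | succ b =>
    rw [Nat.cast_succ b, add_sub_cancel_right, intChoose_natCast]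
    exact_mod_cast Nat.choose_succ_succ a b

theorem add_one_mul_intChoose_eq {a : ℤ} (ha : 0 ≤ a) (b : ℤ) :
    (a + 1) * intChoose a b = intChoose (a + 1) (b + 1) * (b + 1) := by
  lift a to ℕ using ha
  rcases lt_or_ge b 0 with hb | hb
  · rw [intChoose_of_neg hb, mul_zero]
    rcases (show b + 1 ≤ 0 by omega).eq_or_lt with hb' | hb'
    · rw [hb', mul_zero]
    · rw [intChoose_of_neg hb', zero_mul]
  lift b to ℕ using hb
  simp only [← Nat.cast_one (R := ℤ), ← Nat.cast_add, intChoose_natCast]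
  exact_mod_cast Nat.add_one_mul_choose_eq a b

theorem intChoose_mul_succ_eq {a : ℤ} (ha : 0 ≤ a) (b : ℤ) :
    intChoose a b * (a + 1) = intChoose (a + 1) b * (a + 1 - b) := by
  have hpascal := intChoose_succ ha b
  have hshift := add_one_mul_intChoose_eq ha (b - 1)
  rw [sub_add_cancel] at hshift
  linear_combination -(a + 1) * hpascal - hshift

theorem stmt0_general (n k : ℤ) (hn : 1 ≤ n) :
    n * (intChoose (n - 1) k * intChoose (2 * n + 1) (n - k)
        - 2 * intChoose (n - 1) k * intChoose (2 * n) (n - k - 1)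
        - 2 * intChoose (n - 1) (k - 1) * intChoose (2 * n) (n - k - 1))
      = intChoose n k * intChoose (2 * n) (n - 1 - k) := by
  obtain ⟨a, ha, rfl⟩ : ∃ a, 0 ≤ a ∧ n = a + 1 := ⟨n - 1, by omega, by ring⟩
  have hpascal := intChoose_succ ha k
  have habsorb := intChoose_mul_succ_eq ha k
  have habsorb_two := add_one_mul_intChoose_eq (show 0 ≤ 2 * (a + 1) by omega) (a - k)
  rw [add_sub_cancel_right, show a + 1 - k - 1 = a - k by ring, show a + 1 - k = a - k + 1 by ring]
  linear_combination intChoose (2 * (a + 1) + 1) (a - k + 1) * habsorb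
    - intChoose (a + 1) k * habsorb_two + 2 * (a + 1) * intChoose (2 * (a + 1)) (a - k) * hpascal

theorem stmt0 (n k : ℤ) (hn : 1 ≤ n) (hk : 0 ≤ k) (hkn : k ≤ n - 1) :
    n * (intChoose (n - 1) k * intChoose (2 * n + 1) (n - k)
        - 2 * intChoose (n - 1) k * intChoose (2 * n) (n - k - 1)
        - 2 * intChoose (n - 1) (k - 1) * intChoose (2 * n) (n - k - 1))
      = intChoose n k * intChoose (2 * n) (n - 1 - k) :=
  stmt0_general n k hn
end

section
/- Let x, u, t be elements of a field (or formal power series) with x = t(1-t)²/(1-t+ut) and suppose 1-t ≠ 0 and 1-t+ut ≠ 0. Then G = 1/(1-t) satisfies the cubic equation G = 1 + x·G²·(1 - u + u·G). -/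
theorem stmt3 {K : Type*} [Field K] (x u t : K)
    (h1 : 1 - t ≠ 0) (h2 : 1 - t + u * t ≠ 0)
    (hx : x = t * (1 - t) ^ 2 / (1 - t + u * t)) :
    (1 / (1 - t)) = 1 + x * (1 / (1 - t)) ^ 2 * (1 - u + u * (1 / (1 - t))) := by
  -- the last factor cancels the denominator of `x`
  have hfactor : 1 - u + u * (1 / (1 - t)) = (1 - t + u * t) / (1 - t) := by
    field_simp
    ring
  have hterm : x * (1 / (1 - t)) ^ 2 * ((1 - t + u * t) / (1 - t)) = t / (1 - t) := by
    rw [hx]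
    grind
  rw [hfactor, hterm]
  grind
end

section
/- In the polynomial ring ℚ[t,u] (or a suitable field of fractions), with x = t(1-t)²/(1-t+ut), the cubic polynomial equation G = 1 + xG²(1-u+uG) in G has the three roots r₁ = 1/(1-t), r₂ and r₃, where r₂, r₃ = [-t + t² - t²u ± √(t(1-t+ut)(4u+t-4ut-t²+t²u))]/(2ut(1-t)); that is, the cubic xu·G³ + x(1-u)·G² - G + 1 = 0 factors as xu·(G - r₁)(G - r₂)(G - r₃) in any field extension containing the square root. -/
/-! Clearing the denominator `D = 1 - t + u t` of `x`, the cubic splits off the linear factor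
`(1 - t) G - 1` with cofactor `u t (1 - t) G² + t D G - D`. The discriminant of that quadratic is
`t D (4u + t - 4ut - t² + t²u) = s²`, so `r₂, r₃` are its roots by the quadratic formula. -/

theorem quadratic_eq_mul_sub_mul_sub {K : Type*} [Field K] [NeZero (2 : K)] {a b c s : K}
    (ha : a ≠ 0) (hs : s ^ 2 = discrim a b c) (G : K) :
    a * G ^ 2 + b * G + c = a * (G - (-b + s) / (2 * a)) * (G - (-b - s) / (2 * a)) := by
  rw [discrim] at hs
  have h2 : (2 : K) ≠ 0 := two_ne_zero
  field_simp
  linear_combination hs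

theorem mul_cubic_eq_linear_mul_quadratic {K : Type*} [CommRing K] {t u x : K}
    (hx : (1 - t + u * t) * x = t * (1 - t) ^ 2) (G : K) :
    (1 - t + u * t) * (x * u * G ^ 3 + x * (1 - u) * G ^ 2 - G + 1)
      = ((1 - t) * G - 1) * (u * t * (1 - t) * G ^ 2 + t * (1 - t + u * t) * G
          - (1 - t + u * t)) := by
  linear_combination (u * G ^ 3 + (1 - u) * G ^ 2) * hx

theorem stmt4 {K : Type*} [Field K] [CharZero K] (t u s x : K)
    (ht : t ≠ 0) (hu : u ≠ 0) (h1 : 1 - t ≠ 0) (h2 : 1 - t + u * t ≠ 0)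
    (hs : s ^ 2 = t * (1 - t + u * t) * (4 * u + t - 4 * u * t - t ^ 2 + t ^ 2 * u))
    (hx : x = t * (1 - t) ^ 2 / (1 - t + u * t))
    (r₁ r₂ r₃ : K)
    (hr₁ : r₁ = 1 / (1 - t))
    (hr₂ : r₂ = (-t + t ^ 2 - t ^ 2 * u + s) / (2 * u * t * (1 - t)))
    (hr₃ : r₃ = (-t + t ^ 2 - t ^ 2 * u - s) / (2 * u * t * (1 - t))) :
    ∀ G : K, x * u * G ^ 3 + x * (1 - u) * G ^ 2 - G + 1
      = x * u * (G - r₁) * (G - r₂) * (G - r₃) := by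
  intro G
  have hxD : (1 - t + u * t) * x = t * (1 - t) ^ 2 := by rw [hx, mul_div_cancel₀ _ h2]
  have hr₁' : (1 - t) * r₁ = 1 := by rw [hr₁, mul_one_div_cancel h1]
  have ha : u * t * (1 - t) ≠ 0 := mul_ne_zero (mul_ne_zero hu ht) h1
  have hdisc : s ^ 2 = discrim (u * t * (1 - t)) (t * (1 - t + u * t)) (-(1 - t + u * t)) := by
    rw [hs, discrim]; ring
  have hquad : u * t * (1 - t) * G ^ 2 + t * (1 - t + u * t) * G - (1 - t + u * t)
      = u * t * (1 - t) * (G - r₂) * (G - r₃) := by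
    rw [sub_eq_add_neg, quadratic_eq_mul_sub_mul_sub ha hdisc G, hr₂, hr₃]
    ring
  apply mul_left_cancel₀ h2
  rw [mul_cubic_eq_linear_mul_quadratic hxD, hquad]
  linear_combination u * t * (1 - t) * (G - r₂) * (G - r₃) * hr₁'
    - u * (G - r₁) * (G - r₂) * (G - r₃) * hxD
end

section
/- For n ≥ 1, ℓ ≥ 1, k ≥ 0, the coefficient of x^n u^k in t^ℓ (where t = xΦ(t), Φ(t) = (1-t+tu)/(1-t)²) equals (ℓ/n)·C(n,k)·C(2n-ℓ-1, n-ℓ-k). -/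
/-- Unlike `intChoose`, this is polynomial in `a`, so Pascal's rule and its relatives hold
without side conditions. -/
def gchoose (a b : ℤ) : ℤ :=
  if 0 ≤ b then Ring.choose a b.toNat else 0

theorem gchoose_of_neg (a : ℤ) {b : ℤ} (hb : b < 0) : gchoose a b = 0 := by
  simp [gchoose, not_le.mpr hb]

theorem gchoose_natCast (a : ℤ) (k : ℕ) : gchoose a k = Ring.choose a k := by
  simp [gchoose]

theorem gchoose_zero_right (a : ℤ) : gchoose a 0 = 1 := by
  simpa using gchoose_natCast a 0

theorem gchoose_succ_succ (a b : ℤ) :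
    gchoose (a + 1) (b + 1) = gchoose a b + gchoose a (b + 1) := by
  rcases lt_or_ge b 0 with hb | hb
  · rcases (Int.add_one_le_iff.mpr hb).eq_or_lt with hb' | hb'
    · rw [hb', gchoose_zero_right, gchoose_zero_right, gchoose_of_neg a hb, zero_add]
    · rw [gchoose_of_neg _ hb', gchoose_of_neg _ hb', gchoose_of_neg _ hb, add_zero]
  · lift b to ℕ using hb
    rw [← Nat.cast_add_one, gchoose_natCast, gchoose_natCast, gchoose_natCast]
    exact Ring.choose_succ_succ a b

theorem gchoose_succ_right_eq (a b : ℤ) :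
    gchoose a (b + 1) * (b + 1) = gchoose a b * (a - b) := by
  rcases lt_or_ge b 0 with hb | hb
  · rcases (Int.add_one_le_iff.mpr hb).eq_or_lt with hb' | hb'
    · rw [hb', gchoose_of_neg a hb]; ring
    · rw [gchoose_of_neg _ hb', gchoose_of_neg _ hb]; ring
  · lift b to ℕ using hb
    have h := Ring.choose_smul_choose a (Nat.le_add_right b 1)
    rw [Nat.choose_succ_self_right, Nat.add_sub_cancel_left, Ring.choose_one_right,
      nsmul_eq_mul] at h
    rw [← Nat.cast_add_one, gchoose_natCast, gchoose_natCast]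
    push_cast at h ⊢
    linear_combination h

theorem gchoose_mul_succ_eq (a b : ℤ) :
    gchoose a b * (a + 1) = gchoose (a + 1) b * (a + 1 - b) := by
  rcases lt_or_ge b 0 with hb | hb
  · rw [gchoose_of_neg _ hb, gchoose_of_neg _ hb]; ring
  · lift b to ℕ using hb
    have h := Ring.choose_smul_choose (a + 1) (Nat.le_add_left 1 b)
    rw [Nat.choose_one_right, Nat.add_sub_cancel, Ring.choose_one_right, Nat.cast_one,
      add_sub_cancel_right, nsmul_eq_mul] at h
    have h' := gchoose_succ_right_eq (a + 1) b
    rw [← Nat.cast_add_one, gchoose_natCast, gchoose_natCast] at h'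
    rw [gchoose_natCast, gchoose_natCast]
    push_cast at h h' ⊢
    linear_combination h' - h

theorem gchoose_eq_intChoose {a b : ℤ} (h : 0 ≤ a ∨ b < 0) : gchoose a b = intChoose a b := by
  rcases lt_or_ge b 0 with hb | hb
  · simp [gchoose_of_neg _ hb, intChoose, not_le.mpr hb]
  lift b to ℕ using hb
  lift a to ℕ using h.resolve_right (by omega)
  rw [gchoose_natCast, Ring.choose_natCast, intChoose]
  simp only [Nat.cast_nonneg, Nat.cast_le, true_and, Int.toNat_natCast]
  split_ifs with hba
  · rfl
  · simp [Nat.choose_eq_zero_of_lt (not_le.mp hba)]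

/-- `n` times the claimed value of `[x^n u^k] t^l`, which keeps it integral. -/
def lagrangeCoeff (n l k : ℤ) : ℤ :=
  l * gchoose n k * gchoose (2 * n - l - 1) (n - l - k)

theorem lagrangeCoeff_of_lt {n l k : ℤ} (h : n < l + k) : lagrangeCoeff n l k = 0 := by
  rw [lagrangeCoeff, gchoose_of_neg (2 * n - l - 1) (show n - l - k < 0 by omega), mul_zero]

theorem lagrangeCoeff_of_neg (n l : ℤ) {k : ℤ} (hk : k < 0) : lagrangeCoeff n l k = 0 := by
  rw [lagrangeCoeff, gchoose_of_neg n hk, mul_zero, zero_mul]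

theorem lagrangeCoeff_natCast (n l k : ℕ) :
    lagrangeCoeff n l k = l * intChoose n k * intChoose (2 * n - l - 1) (n - l - k) := by
  rcases l.eq_zero_or_pos with rfl | hl
  · simp [lagrangeCoeff]
  rw [lagrangeCoeff, gchoose_eq_intChoose (.inl n.cast_nonneg), gchoose_eq_intChoose (by omega)]

theorem lagrangeCoeff_recurrence (n l k : ℤ) :
    (n + 1) * lagrangeCoeff (n + 2) (l + 1) k
      = (n + 2) * (lagrangeCoeff (n + 1) l k - lagrangeCoeff (n + 1) (l + 1) k
          + lagrangeCoeff (n + 1) (l + 1) (k - 1))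
        + (n + 1) * (2 * lagrangeCoeff (n + 2) (l + 2) k - lagrangeCoeff (n + 2) (l + 3) k) := by
  -- Pascal's rule leaves only `C(n+1, k)`, `C(n+1, k-1)` and `C(2n-l, n-l-k+ε)`, `ε ∈ {-1, 0, 1}`.
  have h1 := gchoose_succ_succ (2 * n + 1 - l) (n - l - k)
  have h2 := gchoose_succ_succ (2 * n - l) (n - l - k)
  have h3 := gchoose_succ_succ (2 * n - l) (n - l - k - 1)
  have h4 := gchoose_succ_succ (n + 1) (k - 1)
  have absorb := gchoose_succ_right_eq (2 * n - l) (n - l - k)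
  have upper := gchoose_mul_succ_eq (n + 1) k
  unfold lagrangeCoeff
  ring_nf at h1 h2 h3 h4 ⊢
  rw [h1, h2, h3, h4]
  linear_combination (norm := ring_nf)
    (gchoose (n + 1) (k - 1) + gchoose (n + 1) k) * absorb
      + (gchoose (2 * n - l) (n + 1 - l - k) + gchoose (2 * n - l) (n - l - k))
        * (upper + (n + 2 - k) * h4)

theorem Nat.decreasing_induction_two {P : ℕ → Prop} (N : ℕ) (large : ∀ l, N < l → P l)
    (step : ∀ l, P (l + 1) → P (l + 2) → P l) (l : ℕ) : P l := by
  induction hd : N + 1 - l using Nat.strong_induction_on generalizing l with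
  | _ d ih =>
    rcases lt_or_ge N l with h | h
    · exact large l h
    · exact step l (ih _ (by omega) _ rfl) (ih _ (by omega) _ rfl)

open PowerSeries

section CommRing

variable {R : Type*} [CommRing R] {T : PowerSeries R}

theorem coeff_pow_of_lt (hT0 : constantCoeff T = 0) {n l : ℕ} (h : n < l) :
    coeff n (T ^ l) = 0 :=
  X_pow_dvd_iff.mp (pow_dvd_pow_of_dvd (X_dvd_iff.mpr hT0) l) n h

theorem coeff_succ_pow_succ {u : R} (hT : T * (1 - T) ^ 2 = X * (1 - T + T * C u)) (j m : ℕ) :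
    coeff (j + 1) (T ^ (m + 1))
      = coeff j (T ^ m) - coeff j (T ^ (m + 1)) + coeff j (T ^ (m + 1)) * u
        + 2 * coeff (j + 1) (T ^ (m + 2)) - coeff (j + 1) (T ^ (m + 3)) := by
  have e : T ^ (m + 1) = X * (T ^ m - T ^ (m + 1) + T ^ (m + 1) * C u)
      + 2 * T ^ (m + 2) - T ^ (m + 3) := by
    linear_combination T ^ m * hT
  have two : (2 : PowerSeries R) = C 2 := (map_ofNat C 2).symm
  rw [congrArg (coeff (j + 1)) e, two]
  simp only [map_sub, map_add, coeff_succ_X_mul, coeff_mul_C, coeff_C_mul]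

theorem coeff_one_eq_one {u : R} (hT0 : constantCoeff T = 0)
    (hT : T * (1 - T) ^ 2 = X * (1 - T + T * C u)) : coeff 1 T = 1 := by
  have h := coeff_succ_pow_succ hT 0 0
  simp only [zero_add, pow_zero, pow_one, coeff_zero_eq_constantCoeff_apply, hT0] at h
  rw [coeff_pow_of_lt hT0 (by norm_num), coeff_pow_of_lt hT0 (by norm_num)] at h
  simpa using h

end CommRing

def HasLagrangeCoeffs (T : PowerSeries (Polynomial ℚ)) (n l : ℕ) : Prop :=
  ∀ k : ℕ, (n : ℚ) * (coeff n (T ^ l)).coeff k = lagrangeCoeff n l k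

section Rational

variable {T : PowerSeries (Polynomial ℚ)}

theorem hasLagrangeCoeffs_of_lt (hT0 : constantCoeff T = 0) {n l : ℕ} (h : n < l) :
    HasLagrangeCoeffs T n l := by
  intro k
  rw [coeff_pow_of_lt hT0 h, lagrangeCoeff_of_lt (by omega)]
  simp

theorem hasLagrangeCoeffs_zero_right (n : ℕ) : HasLagrangeCoeffs T n 0 := by
  intro k
  rcases eq_or_ne n 0 with rfl | hn <;> simp [lagrangeCoeff, coeff_one, *]

theorem hasLagrangeCoeffs_add_two (hT : T * (1 - T) ^ 2 = X * (1 - T + T * C Polynomial.X))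
    {n m : ℕ} (hprev : ∀ l, HasLagrangeCoeffs T (n + 1) l)
    (h2 : HasLagrangeCoeffs T (n + 2) (m + 2)) (h3 : HasLagrangeCoeffs T (n + 2) (m + 3)) :
    HasLagrangeCoeffs T (n + 2) (m + 1) := by
  intro k
  have hrec := congrArg (Polynomial.coeff · k) (coeff_succ_pow_succ hT (n + 1) m)
  simp only [Polynomial.coeff_add, Polynomial.coeff_sub, Polynomial.coeff_ofNat_mul] at hrec
  have ha := hprev m k
  have hb := hprev (m + 1) k
  have hc : ((n + 1 : ℕ) : ℚ) * (coeff (n + 1) (T ^ (m + 1)) * Polynomial.X).coeff k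
      = lagrangeCoeff (n + 1 : ℕ) (m + 1 : ℕ) (k - 1 : ℤ) := by
    rcases k with _ | k
    · rw [Polynomial.coeff_mul_X_zero, lagrangeCoeff_of_neg _ _ (by omega)]; simp
    · rw [Polynomial.coeff_mul_X, hprev]; push_cast; ring_nf
  have hd := h2 k
  have he := h3 k
  have key := congrArg (Int.cast : ℤ → ℚ) (lagrangeCoeff_recurrence n m k)
  refine mul_left_cancel₀ (show (n : ℚ) + 1 ≠ 0 by positivity) ?_
  push_cast at ha hb hc hd he key hrec ⊢
  rw [hrec]
  linear_combination (n + 2 : ℚ) * (ha - hb + hc) + (n + 1 : ℚ) * (2 * hd - he) - key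

theorem hasLagrangeCoeffs (hT0 : constantCoeff T = 0)
    (hT : T * (1 - T) ^ 2 = X * (1 - T + T * C Polynomial.X)) (n l : ℕ) :
    HasLagrangeCoeffs T n l := by
  induction n using Nat.strong_induction_on generalizing l with
  | _ n ih =>
  rcases n with _ | _ | n
  · rcases l with _ | l
    · exact hasLagrangeCoeffs_zero_right 0
    · exact hasLagrangeCoeffs_of_lt hT0 l.succ_pos
  · rcases l with _ | _ | l
    · exact hasLagrangeCoeffs_zero_right 1
    · intro k
      rw [pow_one, coeff_one_eq_one hT0 hT]
      rcases k with _ | k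
      · simp [lagrangeCoeff, gchoose_zero_right]
      · rw [lagrangeCoeff_of_lt (by omega)]; simp [Polynomial.coeff_one]
    · exact hasLagrangeCoeffs_of_lt hT0 (by omega)
  induction l using Nat.decreasing_induction_two (N := n + 2) with
  | large l hl => exact hasLagrangeCoeffs_of_lt hT0 hl
  | step l h2 h3 =>
    rcases l with _ | m
    · exact hasLagrangeCoeffs_zero_right (n + 2)
    · exact hasLagrangeCoeffs_add_two hT (ih (n + 1) (by omega)) h2 h3

end Rational

/-- `[x^n u^k] t^ℓ = (ℓ/n)·C(n,k)·C(2n-ℓ-1, n-ℓ-k)` where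
`t = x(1-t+tu)/(1-t)²` is a power series in `x` over `ℚ[u]`. -/
theorem stmt11 (T : PowerSeries (Polynomial ℚ))
    (hT0 : PowerSeries.constantCoeff T = 0)
    (hT : T * (1 - T) ^ 2
        = PowerSeries.X * (1 - T + T * PowerSeries.C Polynomial.X)) :
    ∀ n ℓ k : ℕ, 1 ≤ n → 1 ≤ ℓ →
      (n : ℚ) * ((PowerSeries.coeff n (T ^ ℓ)).coeff k)
        = ((ℓ : ℤ) * intChoose n k
            * intChoose (2 * n - ℓ - 1) ((n : ℤ) - ℓ - k) : ℤ) := by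
  intro n ℓ k _ _
  rw [hasLagrangeCoeffs hT0 hT n ℓ k, lagrangeCoeff_natCast]
end

section
/- Coefficient extraction of r₁ = 1/(1-t): for n ≥ 1, [x^n] 1/(1-t) = [t^n] (1-3t+2t²-2t²u)·(1-t+tu)^{n-1}/(1-t)^{2n+2}, where t = x(1-t+tu)/(1-t)² is the formal power series substitution. -/
/-!
Write `T = X * V` and let `W` be the inverse of `V`. Lagrange–Bürmann inversion in the form
`[x^n] F(T) * T' * W^(n+1) = [t^n] F` holds for every power series `F`: by linearity and
truncation it reduces to `[x^n] T^i * T' * W^(n+1) = [x^(n-i)] T' * W^(n-i+1)`, which vanishes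
unless `i = n` because `m * T' * W^(m+1) = m * W^m - X * (W^m)'` has no `x^m` term.

Here `V = N(T) / (1-T)^2` with `N(t) = 1 - t + t u`, and differentiating the functional equation
gives `T' * (1-T) * P(T) = N(T)^2` with `P(t) = 1 - 3t + 2t^2 - 2t^2 u`. Hence, for the series `A`
with `A(t) (1-t)^(2n+2) = P(t) N(t)^(n-1)`, we get exactly `A(T) * T' * W^(n+1) = 1/(1-T)`.
-/

open PowerSeries

namespace PowerSeries

variable {R : Type*} [CommRing R] {T V W : R⟦X⟧}

theorem coeff_derivative_mul_pow_of_eq_X_mul [IsAddTorsionFree R] (hT : T = X * V)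
    (hVW : V * W = 1) (m : ℕ) : coeff m (d⁄dX R T * W ^ (m + 1)) = if m = 0 then 1 else 0 := by
  have hT' : d⁄dX R T = V + X * d⁄dX R V := by simp [hT, Derivation.leibniz, add_comm]
  rw [hT']
  rcases m with _ | j
  · simpa using congrArg constantCoeff hVW
  · have hdVW : d⁄dX R V * W + V * d⁄dX R W = 0 := by
      simpa [Derivation.leibniz, add_comm, mul_comm] using congrArg (d⁄dX R) hVW
    have key : ((j : R⟦X⟧) + 1) * ((V + X * d⁄dX R V) * W ^ (j + 2))
        = ((j : R⟦X⟧) + 1) * W ^ (j + 1) - X * d⁄dX R (W ^ (j + 1)) := by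
      rw [derivative_pow]
      push_cast
      linear_combination ((j : R⟦X⟧) + 1) * W ^ (j + 1) * hVW
        + ((j : R⟦X⟧) + 1) * X * W ^ (j + 1) * hdVW
        - ((j : R⟦X⟧) + 1) * X * W ^ j * d⁄dX R W * hVW
    have hcoeff := congrArg (coeff (j + 1)) key
    rw [← map_natCast (C (R := R)), ← map_one (C (R := R)), ← map_add, coeff_C_mul, map_sub,
      coeff_C_mul, coeff_succ_X_mul, coeff_derivative, sub_eq_zero.2 (mul_comm _ _)] at hcoeff
    rw [if_neg j.succ_ne_zero]
    apply IsAddTorsionFree.nsmul_right_injective j.succ_ne_zero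
    simpa [nsmul_eq_mul] using hcoeff

theorem coeff_pow_mul_derivative_mul_pow_of_eq_X_mul [IsAddTorsionFree R] (hT : T = X * V)
    (hVW : V * W = 1) (i n : ℕ) :
    coeff n (T ^ i * d⁄dX R T * W ^ (n + 1)) = if i = n then 1 else 0 := by
  rcases le_or_gt i n with hin | hni
  · obtain ⟨m, rfl⟩ := Nat.exists_eq_add_of_le' hin
    have hTW : T * W = X := by rw [hT, mul_assoc, hVW, mul_one]
    have hsplit : T ^ i * d⁄dX R T * W ^ (m + i + 1) = X ^ i * (d⁄dX R T * W ^ (m + 1)) := by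
      rw [← hTW]; ring
    rw [hsplit, coeff_X_pow_mul, coeff_derivative_mul_pow_of_eq_X_mul hT hVW]
    simp
  · have hsplit : T ^ i * d⁄dX R T * W ^ (n + 1) = X ^ i * (V ^ i * d⁄dX R T * W ^ (n + 1)) := by
      rw [hT]; ring
    rw [hsplit, coeff_X_pow_mul', if_neg hni.not_ge, if_neg hni.ne']

theorem coeff_aeval_mul_derivative_mul_pow_of_eq_X_mul [IsAddTorsionFree R] (hT : T = X * V)
    (hVW : V * W = 1) (p : Polynomial R) (n : ℕ) :
    coeff n (Polynomial.aeval T p * d⁄dX R T * W ^ (n + 1)) = p.coeff n := by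
  induction p using Polynomial.induction_on' with
  | add p q hp hq => simp [add_mul, hp, hq]
  | monomial k a =>
    rw [Polynomial.aeval_monomial, ← Algebra.smul_def, smul_mul_assoc, smul_mul_assoc,
      coeff_smul, coeff_pow_mul_derivative_mul_pow_of_eq_X_mul hT hVW, Polynomial.coeff_monomial]
    simp

theorem coeff_subst_mul_derivative_mul_pow_of_eq_X_mul [IsAddTorsionFree R] (hT : T = X * V)
    (hVW : V * W = 1) (F : R⟦X⟧) (n : ℕ) :
    coeff n (F.subst T * d⁄dX R T * W ^ (n + 1)) = coeff n F := by
  have hTsubst : HasSubst T := HasSubst.of_constantCoeff_zero' (by simp [hT])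
  obtain ⟨G, hG⟩ : X ^ (n + 1) ∣ F - (trunc (n + 1) F : R⟦X⟧) := by
    refine X_pow_dvd_iff.2 fun d hd => ?_
    simp [coeff_trunc, hd]
  have hF : F.subst T = Polynomial.aeval T (trunc (n + 1) F) + T ^ (n + 1) * G.subst T := by
    rw [sub_eq_iff_eq_add'] at hG
    conv_lhs => rw [hG]
    rw [← coe_substAlgHom hTsubst, map_add, map_mul, map_pow, substAlgHom_X, substAlgHom_coe]
  have hXT : X ^ (n + 1) ∣ T ^ (n + 1) * G.subst T * d⁄dX R T * W ^ (n + 1) :=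
    Dvd.dvd.mul_right (Dvd.dvd.mul_right (Dvd.dvd.mul_right
      (by rw [hT, mul_pow]; exact dvd_mul_right _ _) _) _) _
  rw [hF, add_mul, add_mul, map_add, coeff_aeval_mul_derivative_mul_pow_of_eq_X_mul hT hVW,
    coeff_trunc, if_pos n.lt_succ_self, X_pow_dvd_iff.1 hXT n n.lt_succ_self, add_zero]

theorem substAlgHom_C {a : R⟦X⟧} (ha : HasSubst a) (r : R) : substAlgHom ha (C r) = C r :=
  (substAlgHom ha).commutes r

theorem derivative_mul_eq_sq_of_mul_one_sub_sq_eq {u : R}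
    (hT : T * (1 - T) ^ 2 = X * (1 - T + T * C u)) :
    d⁄dX R T * ((1 - T) * (1 - 3 * T + 2 * T ^ 2 - 2 * T ^ 2 * C u)) = (1 - T + T * C u) ^ 2 := by
  have hd := congrArg (d⁄dX R) hT
  simp only [Derivation.leibniz, Derivation.leibniz_pow, map_sub, map_add,
    Derivation.map_one_eq_zero, derivative_X, derivative_C, smul_eq_mul, nsmul_eq_mul,
    Nat.cast_ofNat] at hd
  linear_combination (1 - T + T * C u) * hd - (C u - 1) * d⁄dX R T * hT

end PowerSeries

/-- For `n ≥ 1`, `[x^n] 1/(1-t) = [t^n] (1-3t+2t²-2t²u)(1-t+tu)^{n-1}/(1-t)^{2n+2}`,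
where `t = x(1-t+tu)/(1-t)²` is a power series in `x` over `ℚ[u]`.  Here `G` is the
series `1/(1-t)` (i.e. `G·(1-T) = 1`) and `A` is the auxiliary series in the
variable `t` with `A·(1-t)^{2n+2} = (1-3t+2t²-2t²u)(1-t+tu)^{n-1}`. -/
theorem stmt15 (T : PowerSeries (Polynomial ℚ))
    (hT0 : PowerSeries.constantCoeff T = 0)
    (hT : T * (1 - T) ^ 2
        = PowerSeries.X * (1 - T + T * PowerSeries.C Polynomial.X)) :
    ∀ n : ℕ, 1 ≤ n →
      ∀ G A : PowerSeries (Polynomial ℚ),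
        G * (1 - T) = 1 →
        A * (1 - PowerSeries.X) ^ (2 * n + 2)
          = (1 - 3 * PowerSeries.X + 2 * PowerSeries.X ^ 2
              - 2 * PowerSeries.X ^ 2 * PowerSeries.C Polynomial.X)
            * (1 - PowerSeries.X
                + PowerSeries.C Polynomial.X * PowerSeries.X) ^ (n - 1) →
        PowerSeries.coeff n G = PowerSeries.coeff n A := by
  intro n hn G A hG hA
  obtain ⟨k, rfl⟩ := Nat.exists_eq_add_of_le' hn
  set N := 1 - T + T * C Polynomial.X with hN
  obtain ⟨iN, hiN⟩ :=
    (isUnit_iff_constantCoeff.2 (by simp [hN, hT0]) : IsUnit N).exists_right_inv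
  have hAT : A.subst T * (1 - T) ^ (2 * (k + 1) + 2)
      = (1 - 3 * T + 2 * T ^ 2 - 2 * T ^ 2 * C Polynomial.X) * N ^ k := by
    have h := congrArg (substAlgHom (HasSubst.of_constantCoeff_zero' hT0)) hA
    simp only [map_mul, map_sub, map_add, map_pow, map_one, map_ofNat, substAlgHom_X,
      substAlgHom_C, Nat.add_sub_cancel, coe_substAlgHom] at h
    linear_combination h
  have hTV : T = X * (N * G ^ 2) := by
    linear_combination G ^ 2 * hT - T * (G * (1 - T) + 1) * hG
  have hVW : N * G ^ 2 * ((1 - T) ^ 2 * iN) = 1 := by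
    linear_combination (G * (1 - T)) ^ 2 * hiN + (G * (1 - T) + 1) * hG
  have hGA : G = A.subst T * d⁄dX _ T * ((1 - T) ^ 2 * iN) ^ (k + 1 + 1) := by
    have hpow : N ^ (k + 2) * iN ^ (k + 2) = 1 := by rw [← mul_pow, hiN, one_pow]
    rw [mul_pow, ← pow_mul]
    linear_combination (-(d⁄dX _ T) * iN ^ (k + 2)) * hAT
      - N ^ k * iN ^ (k + 2) * G * derivative_mul_eq_sq_of_mul_one_sub_sq_eq hT
      + N ^ k * iN ^ (k + 2) * d⁄dX _ T
        * (1 - 3 * T + 2 * T ^ 2 - 2 * T ^ 2 * C Polynomial.X) * hG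
      - G * hpow
  rw [hGA, coeff_subst_mul_derivative_mul_pow_of_eq_X_mul hTV hVW]
end

section
/- The generating function G(x,u) = ∑_{n,k} T(n,k) x^n u^k of ternary trees with n nodes and k middle edges, defined as the unique formal power series with constant term 1 satisfying G = 1 + xG²(1-u+uG), has coefficients [x^n u^k] G = (1/n)·C(n,k)·C(2n, n-1-k) for n ≥ 1. -/
theorem intChoose_natCast_sub (a b c : ℕ) :
    intChoose a ((b : ℤ) - c) = if c ≤ b then (a.choose (b - c) : ℤ) else 0 := by
  split_ifs with h
  · rw [← Nat.cast_sub h, intChoose_natCast]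
  · exact if_neg (by omega)

open Polynomial in
theorem Polynomial.coeff_coeff_one_add_X_pow_mul_one_add_C_X_mul_X_pow {K : Type*}
    [CommSemiring K] (p q n k : ℕ) :
    (((1 + X) ^ p * (1 + C X * X) ^ q : K[X][X]).coeff n).coeff k
      = if k ≤ n then (p.choose (n - k) * q.choose k : K) else 0 := by
  have hq (j : ℕ) : ((1 + C X * X) ^ q : K[X][X]).coeff j = (q.choose j : K[X]) * X ^ j := by
    rw [show (1 + C X * X : K[X][X]) = (1 + X).comp (C X * X) by simp, ← pow_comp,
      comp_C_mul_X_coeff, coeff_one_add_X_pow]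
  rw [coeff_mul, ← Finset.Nat.sum_antidiagonal_swap,
    Finset.Nat.sum_antidiagonal_eq_sum_range_succ_mk, finsetSum_coeff]
  simp_rw [Prod.swap, hq, coeff_one_add_X_pow, ← mul_assoc, ← Nat.cast_mul, coeff_natCast_mul,
    coeff_X_pow, mul_ite, mul_one, mul_zero]
  simp [Finset.sum_ite_eq]

namespace PowerSeries

theorem constantCoeff_eval₂_C_of_constantCoeff_eq_zero {R : Type*} [CommSemiring R]
    (φ : Polynomial R) {W : R⟦X⟧} (hW : constantCoeff W = 0) :
    constantCoeff (φ.eval₂ C W) = φ.coeff 0 := by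
  rw [Polynomial.hom_eval₂, hW, Polynomial.coeff_zero_eq_eval_zero]
  congr

section LagrangeInversion

variable {R : Type*} [CommRing R] [IsAddTorsionFree R]

theorem coeff_pow_succ_mul_derivative_X_mul {U V : R⟦X⟧} (hUV : U * V = 1) (d : ℕ) :
    coeff d (V ^ (d + 1) * d⁄dX R (X * U)) = if d = 0 then 1 else 0 := by
  set H := X * U
  have hHV : H * V = X := by rw [mul_assoc, hUV, mul_one]
  have hV' : X * d⁄dX R V = V - V ^ 2 * d⁄dX R H := by
    have h := congrArg (d⁄dX R) hHV
    rw [Derivation.leibniz, derivative_X, smul_eq_mul, smul_eq_mul] at h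
    linear_combination V * h - d⁄dX R V * hHV
  rcases d with _ | d
  · have hVU : constantCoeff V * constantCoeff U = 1 := by
      rw [← map_mul, mul_comm, hUV, map_one]
    simp [H, hVU]
  · have hpow : X * d⁄dX R (V ^ (d + 1)) =
        (d + 1 : R⟦X⟧) * (V ^ (d + 1) - V ^ (d + 2) * d⁄dX R H) := by
      rw [derivative_pow]
      push_cast
      linear_combination ((d : R⟦X⟧) + 1) * V ^ d * hV'
    have h := congrArg (coeff (d + 1)) hpow
    rw [coeff_succ_X_mul, coeff_derivative, ← map_natCast (C (R := R)), ← map_one (C (R := R)),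
      ← map_add, coeff_C_mul, map_sub] at h
    have h' : (d + 1) • coeff (d + 1) (V ^ (d + 2) * d⁄dX R H) = 0 := by
      rw [nsmul_eq_mul]
      push_cast
      linear_combination h
    simpa using (smul_eq_zero.mp h').resolve_left d.succ_ne_zero

theorem coeff_pow_mul_pow_succ_mul_derivative {U V W : R⟦X⟧} (hUV : U * V = 1)
    (hW : W = X * U) (j n : ℕ) :
    coeff n (W ^ j * (V ^ (n + 1) * d⁄dX R W)) = if j = n then 1 else 0 := by
  subst hW
  by_cases hjn : j ≤ n
  · obtain ⟨i, rfl⟩ := Nat.exists_eq_add_of_le hjn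
    have h : (X * U) ^ j * (V ^ (j + i + 1) * d⁄dX R (X * U))
        = X ^ j * (V ^ (i + 1) * d⁄dX R (X * U)) := by
      calc _ = X ^ j * (U * V) ^ j * (V ^ (i + 1) * d⁄dX R (X * U)) := by ring
        _ = _ := by rw [hUV, one_pow, mul_one]
    rw [h, add_comm j i, coeff_X_pow_mul, coeff_pow_succ_mul_derivative_X_mul hUV]
    simp
  · rw [mul_pow, mul_assoc, coeff_X_pow_mul', if_neg hjn, if_neg (by omega)]

theorem lagrange_inversion {φ : Polynomial R} (hφ : IsUnit (φ.coeff 0)) {W : R⟦X⟧}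
    (hW : W = X * φ.eval₂ C W) (n : ℕ) :
    (n + 1) * coeff (n + 1) W = (φ ^ (n + 1)).coeff n := by
  have hU : IsUnit (φ.eval₂ C W) := by
    rw [isUnit_iff_constantCoeff, constantCoeff_eval₂_C_of_constantCoeff_eq_zero]
    · exact hφ
    · rw [hW, map_mul, constantCoeff_X, zero_mul]
  obtain ⟨V, hUV⟩ := hU.exists_right_inv
  calc (n + 1) * coeff (n + 1) W = coeff n (d⁄dX R W) := by rw [coeff_derivative, mul_comm]
    _ = coeff n ((φ ^ (n + 1)).eval₂ C W * (V ^ (n + 1) * d⁄dX R W)) := by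
      rw [Polynomial.eval₂_pow, ← mul_assoc, ← mul_pow, hUV, one_pow, one_mul]
    _ = ∑ j ∈ Finset.range ((φ ^ (n + 1)).natDegree + 1),
          (φ ^ (n + 1)).coeff j * coeff n (W ^ j * (V ^ (n + 1) * d⁄dX R W)) := by
      simp [Polynomial.eval₂_eq_sum_range, Finset.sum_mul, mul_assoc]
    _ = _ := by
      simp only [coeff_pow_mul_pow_succ_mul_derivative hUV hW, mul_ite, mul_one, mul_zero,
        Finset.sum_ite_eq', Finset.mem_range]
      split_ifs with h
      · rfl
      · exact (Polynomial.coeff_eq_zero_of_natDegree_lt (by omega)).symm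

end LagrangeInversion

end PowerSeries

theorem stmt17_general (G : PowerSeries (Polynomial ℚ))
    (hG : G = 1 + PowerSeries.X * G ^ 2
        * (1 - PowerSeries.C (R := Polynomial ℚ) Polynomial.X
            + PowerSeries.C (R := Polynomial ℚ) Polynomial.X * G)) :
    ∀ n k : ℕ, 1 ≤ n →
      (n : ℚ) * ((PowerSeries.coeff n G).coeff k)
        = ((intChoose n k * intChoose (2 * n) ((n : ℤ) - 1 - k) : ℤ) : ℚ) := by
  intro n k hn
  obtain ⟨m, rfl⟩ := Nat.exists_eq_add_of_le' hn
  set φ : Polynomial (Polynomial ℚ) :=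
    (1 + Polynomial.X) ^ 2 * (1 + Polynomial.C Polynomial.X * Polynomial.X) with hφdef
  have hW : G - 1 = PowerSeries.X * φ.eval₂ PowerSeries.C (G - 1) := by
    simp only [hφdef, Polynomial.eval₂_mul, Polynomial.eval₂_pow, Polynomial.eval₂_add,
      Polynomial.eval₂_one, Polynomial.eval₂_X, Polynomial.eval₂_C]
    linear_combination hG
  have hφ : IsUnit (φ.coeff 0) := by simp [hφdef, Polynomial.coeff_one_add_X_pow]
  have hφpow : φ ^ (m + 1) = (1 + Polynomial.X) ^ (2 * (m + 1))
      * (1 + Polynomial.C Polynomial.X * Polynomial.X) ^ (m + 1) := by rw [hφdef, mul_pow, ← pow_mul]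
  have h := congrArg (Polynomial.coeff · k) (PowerSeries.lagrange_inversion hφ hW m)
  rw [map_sub, PowerSeries.coeff_one, if_neg m.succ_ne_zero, sub_zero, ← Nat.cast_succ,
    Polynomial.coeff_natCast_mul, hφpow,
    Polynomial.coeff_coeff_one_add_X_pow_mul_one_add_C_X_mul_X_pow] at h
  have e1 : (2 * ((m + 1 : ℕ) : ℤ)) = ((2 * (m + 1) : ℕ) : ℤ) := by push_cast; ring
  have e2 : ((m + 1 : ℕ) : ℤ) - 1 - k = (m : ℤ) - k := by push_cast; ring
  rw [e1, e2, intChoose_natCast_sub, intChoose_natCast]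
  split_ifs at h ⊢
  · push_cast at h ⊢
    linear_combination h
  · simpa using h

/-- The generating function `G` of ternary trees by nodes and middle edges,
i.e. the power series in `x` over `ℚ[u]` with constant term 1 satisfying
`G = 1 + xG²(1-u+uG)`, has `[x^n u^k] G = (1/n)·C(n,k)·C(2n, n-1-k)` for `n ≥ 1`. -/
theorem stmt17 (G : PowerSeries (Polynomial ℚ))
    (hG0 : PowerSeries.constantCoeff G = 1)
    (hG : G = 1 + PowerSeries.X * G ^ 2
        * (1 - PowerSeries.C (R := Polynomial ℚ) Polynomial.X
            + PowerSeries.C (R := Polynomial ℚ) Polynomial.X * G)) :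
    ∀ n k : ℕ, 1 ≤ n →
      (n : ℚ) * ((PowerSeries.coeff n G).coeff k)
        = ((intChoose n k * intChoose (2 * n) ((n : ℤ) - 1 - k) : ℤ) : ℚ) :=
  stmt17_general G hG
end
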